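/- arXiv:2502.07048 — 2 statements merged into one kernel-verified Lean document; each statement's English description precedes it below -/
import Mathlib

section
/- Let I ⊆ R be a bihomogeneous ideal with V(I) nonempty, generated in bidegrees componentwise ≤ (a,b), and such that HF_{R/I}(a,b) = HF_{R/I}(a+1,b). Then (a,b) is an admissible bidegree for I if and only if HF_{R/(I+⟨h'⟩)}(a,b) = 0 for every linear form h' of bidegree (1,0) in a nonempty Zariski-open subset of the space R_{(1,0)} of such forms (i.e., for a generic linear form h' ∈ R_{(1,0)}). -/
/-!
For a form `ℓ` of bidegree `(1,0)`, `HF_{R/(I+⟨ℓ⟩)}(a,b) = 0` means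
`R_{(a,b)} = I_{(a,b)} + ℓ·R_{(a-1,b)}`, because `I` is bihomogeneous. For `a = 0` the form plays
no role. For `a ≥ 1` and `ℓ = ∑ vᵢ xᵢ`, the right-hand side is spanned by a finite family of
vectors of `R_{(a,b)}` depending affinely on `v`; it is everything iff some maximal minor of their
coordinate matrix, a polynomial in `v`, does not vanish. The minor that is nonzero at one
admissible form is a nonzero polynomial; conversely, over an infinite field a nonzero polynomial
has a non-root, which gives an admissible form.
-/

open MvPolynomial

noncomputable section

/-- The variables of the bigraded ring: `x₀,…,xₙ` and `y₀,…,y_m`. -/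
abbrev Vars (n m : ℕ) := Fin (n+1) ⊕ Fin (m+1)

/-- The bigrading weight: `deg xᵢ = (1,0)`, `deg y_j = (0,1)`. -/
def wB (n m : ℕ) : Vars n m → ℕ × ℕ := Sum.elim (fun _ => (1, 0)) (fun _ => (0, 1))

/-- The bigraded polynomial ring `R = k[x₀,…,xₙ,y₀,…,y_m]`. -/
abbrev BiRing (k : Type*) [Field k] (n m : ℕ) := MvPolynomial (Vars n m) k

variable (k : Type*) [Field k] (n m : ℕ)

/-- The `k`-vector space of bihomogeneous polynomials of bidegree `d`. -/
def biComponent (d : ℕ × ℕ) : Submodule k (BiRing k n m) :=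
  weightedHomogeneousSubmodule k (wB n m) d

/-- An ideal is bihomogeneous if it is generated by bihomogeneous elements. -/
def IsBihomogeneous (I : Ideal (BiRing k n m)) : Prop :=
  ∃ S : Set (BiRing k n m), Ideal.span S = I ∧
    ∀ f ∈ S, ∃ d : ℕ × ℕ, f.IsWeightedHomogeneous (wB n m) d

/-- `I` is generated in bidegrees componentwise at most `(a,b)`. -/
def GenInDegLE (I : Ideal (BiRing k n m)) (a b : ℕ) : Prop :=
  ∃ S : Set (BiRing k n m), Ideal.span S = I ∧
    ∀ f ∈ S, ∃ d : ℕ × ℕ, d.1 ≤ a ∧ d.2 ≤ b ∧ f.IsWeightedHomogeneous (wB n m) d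

/-- The Hilbert function `HF_{R/I}(a,b) = dim_k (R/I)_{(a,b)}`, where `(R/I)_{(a,b)}` is the
image of the bidegree-`(a,b)` component of `R` in `R/I`. -/
def HF (I : Ideal (BiRing k n m)) (a b : ℕ) : ℕ :=
  Module.finrank k ((biComponent k n m (a, b)).map (Ideal.Quotient.mkₐ k I).toLinearMap)

/-- `h` is an admissible linear form for `I` at bidegree `(a,b)`:  `h` has bidegree `(1,0)`,
`HF_{R/I}(a,b) = HF_{R/I}(a+1,b)` and `HF_{R/(I+⟨h⟩)}(a,b) = 0`. -/
def IsAdmissibleForm (I : Ideal (BiRing k n m)) (a b : ℕ) (h : BiRing k n m) : Prop :=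
  h.IsWeightedHomogeneous (wB n m) (1, 0) ∧
  HF k n m I a b = HF k n m I (a+1) b ∧
  HF k n m (I ⊔ Ideal.span {h}) a b = 0

/-- `(a,b)` is an admissible bidegree for `I`: `I` is generated in bidegrees `≤ (a,b)` and
there is an admissible linear form for `(a,b)`. -/
def IsAdmissible (I : Ideal (BiRing k n m)) (a b : ℕ) : Prop :=
  GenInDegLE k n m I a b ∧ ∃ h, IsAdmissibleForm k n m I a b h

/-- The subring `R_X = k[x₀,…,xₙ]`. -/
abbrev XRing (k : Type*) [Field k] (n : ℕ) := MvPolynomial (Fin (n+1)) k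

/-- The inclusion `R_X = k[x₀,…,xₙ] → R`. -/
def ιX : XRing k n →ₐ[k] BiRing k n m := rename Sum.inl

/-- The irrelevant ideal `𝔪_y = ⟨y₀,…,y_m⟩ ⊆ R`. -/
def myId : Ideal (BiRing k n m) := Ideal.span (Set.range fun j : Fin (m+1) => X (Sum.inr j))

/-- The irrelevant ideal `𝔪_x = ⟨x₀,…,xₙ⟩ ⊆ R`. -/
def mxId : Ideal (BiRing k n m) := Ideal.span (Set.range fun i : Fin (n+1) => X (Sum.inl i))

/-- The ideal `J_b = (I : 𝔪_y^b) ∩ R_X ⊆ R_X`. -/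
def Jb (I : Ideal (BiRing k n m)) (b : ℕ) : Ideal (XRing k n) :=
  (Submodule.colon I ((myId k n m ^ b : Ideal (BiRing k n m)) : Set (BiRing k n m))).comap (ιX k n m)

variable (K : Type*) [Field K] [Algebra k K]

/-- The zero locus in `ℙⁿ(K)` of an ideal `J ⊆ R_X`. -/
def projZeros (J : Ideal (XRing k n)) : Set (Projectivization K (Fin (n+1) → K)) :=
  {ξ | ∀ f ∈ J, aeval ξ.rep f = 0}

/-- The biprojective zero locus `V(I) ⊆ ℙⁿ(K) × ℙᵐ(K)` of a bihomogeneous ideal `I ⊆ R`. -/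
def biprojZeros (I : Ideal (BiRing k n m)) :
    Set (Projectivization K (Fin (n+1) → K) × Projectivization K (Fin (m+1) → K)) :=
  {p | ∀ f ∈ I, aeval (Sum.elim p.1.rep p.2.rep) f = 0}

/-- The projection `π(V(I)) ⊆ ℙⁿ(K)` of `V(I)` onto the first factor. -/
def piV (I : Ideal (BiRing k n m)) : Set (Projectivization K (Fin (n+1) → K)) :=
  Prod.fst '' biprojZeros k n m K I

/-- The bilinear form of bidegree `(1,0)` with coefficient vector `v`: `∑ᵢ vᵢ xᵢ`. -/
def linForm (v : Fin (n+1) → k) : BiRing k n m := ∑ i, C (v i) * X (Sum.inl i)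


section GenericSpanning

variable {k W ι : Type*} [Field k] [AddCommGroup W] [Module k W]

theorem Module.Basis.exists_isUnit_det_comp_of_span_eq_top {κ : Type*} [Fintype κ]
    [DecidableEq κ] [Finite ι] (e : Module.Basis κ k W) {f : ι → W}
    (hf : Submodule.span k (Set.range f) = ⊤) : ∃ τ : κ → ι, IsUnit (e.det (f ∘ τ)) := by
  obtain ⟨κ', a, -, hspan, hli⟩ := exists_linearIndependent' k f
  let b := Module.Basis.mk hli (by rw [hspan, hf])
  refine ⟨a ∘ (e.indexEquiv b), (e.is_basis_iff_det).mp ?_⟩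
  have : f ∘ a ∘ e.indexEquiv b = b.reindex (e.indexEquiv b).symm := by
    ext t; simp [b]
  rw [this]
  exact ⟨(b.reindex _).linearIndependent, (b.reindex _).span_eq⟩

theorem exists_ne_zero_forall_span_eq_top_of_affine [FiniteDimensional k W] {σ : Type*}
    [Fintype σ] [Finite ι] (F₀ : ι → W) (G : σ → ι → W) (c : σ → k)
    (hc : Submodule.span k (Set.range fun j => F₀ j + ∑ i, c i • G i j) = ⊤) :
    ∃ P : MvPolynomial σ k, P ≠ 0 ∧ ∀ v, eval v P ≠ 0 →
      Submodule.span k (Set.range fun j => F₀ j + ∑ i, v i • G i j) = ⊤ := by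
  classical
  let e := Module.finBasis k W
  obtain ⟨τ, hτ⟩ := e.exists_isUnit_det_comp_of_span_eq_top hc
  -- the coordinates of the `τ`-columns are affine, hence polynomial, in the parameter
  let M : Matrix _ _ (MvPolynomial σ k) := Matrix.of fun t t' =>
    C (e.repr (F₀ (τ t')) t) + ∑ i, C (e.repr (G i (τ t')) t) * X i
  have hM : ∀ v, eval v M.det = e.det ((fun j => F₀ j + ∑ i, v i • G i j) ∘ τ) := by
    intro v
    rw [RingHom.map_det, e.det_apply]
    congr 1
    ext t t'
    simp [M, e.toMatrix_apply, mul_comm]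
  refine ⟨M.det, fun h0 => ?_, fun v hv => ?_⟩
  · rw [← hM, h0, map_zero] at hτ
    exact not_isUnit_zero hτ
  · rw [hM] at hv
    refine eq_top_iff.mpr (le_trans ?_ (Submodule.span_mono (Set.range_comp_subset_range τ _)))
    exact ((e.is_basis_iff_det).mpr (isUnit_iff_ne_zero.mpr hv)).2.ge

variable {M : Type*} [AddCommGroup M] [Module k M]

theorem Submodule.le_span_range_subtype_iff {S : Submodule k M} (f : ι → S) :
    S ≤ Submodule.span k (Set.range fun j => (f j : M)) ↔
      Submodule.span k (Set.range f) = ⊤ := by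
  rw [← Submodule.comap_subtype_eq_top, ← Submodule.comap_map_eq_of_injective
    S.injective_subtype (Submodule.span k (Set.range f)), Submodule.map_span, ← Set.range_comp]
  rfl

theorem exists_ne_zero_forall_le_span_of_affine {σ : Type*} [Fintype σ] [Finite ι]
    (S : Submodule k M) [FiniteDimensional k S] (F₀ : ι → M) (G : σ → ι → M)
    (hF₀ : ∀ j, F₀ j ∈ S) (hG : ∀ i j, G i j ∈ S) (c : σ → k)
    (hc : S ≤ Submodule.span k (Set.range fun j => F₀ j + ∑ i, c i • G i j)) :
    ∃ P : MvPolynomial σ k, P ≠ 0 ∧ ∀ v, eval v P ≠ 0 →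
      S ≤ Submodule.span k (Set.range fun j => F₀ j + ∑ i, v i • G i j) := by
  have key := fun v : σ → k => Submodule.le_span_range_subtype_iff (S := S)
    fun j => ⟨F₀ j, hF₀ j⟩ + ∑ i, v i • (⟨G i j, hG i j⟩ : S)
  simp only [Submodule.coe_add, Submodule.coe_sum, Submodule.coe_smul] at key
  simp only [key] at hc ⊢
  exact exists_ne_zero_forall_span_eq_top_of_affine _ _ c hc

end GenericSpanning

section Graded

variable {ι R A : Type*} [DecidableEq ι] [AddCommMonoid ι] [PartialOrder ι]
  [CanonicallyOrderedAdd ι] [CommSemiring R] [CommSemiring A] [Algebra R A]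
  {𝒜 : ι → Submodule R A} [GradedAlgebra 𝒜] {I : Ideal A} {h : A} {i j : ι}

theorem Ideal.IsHomogeneous.mem_of_mem_sup_span_singleton_of_not_le (hI : I.IsHomogeneous 𝒜)
    (hh : h ∈ 𝒜 j) (hji : ¬j ≤ i) {f : A} (hf : f ∈ 𝒜 i) (hfI : f ∈ I ⊔ Ideal.span {h}) :
    f ∈ I := by
  obtain ⟨p, hp, q, hq, rfl⟩ := Submodule.mem_sup.mp hfI
  obtain ⟨r, rfl⟩ := Ideal.mem_span_singleton'.mp hq
  rw [← DirectSum.decompose_of_mem_same 𝒜 hf, DirectSum.decompose_add, DirectSum.add_apply,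
    Submodule.coe_add, DirectSum.coe_decompose_mul_of_right_mem_of_not_le 𝒜 hh hji, add_zero]
  exact hI i hp

theorem Ideal.IsHomogeneous.le_sup_span_singleton_iff [Sub ι] [OrderedSub ι]
    [AddLeftReflectLE ι] (hI : I.IsHomogeneous 𝒜) (hh : h ∈ 𝒜 j) (hji : j ≤ i) :
    𝒜 i ≤ (I ⊔ Ideal.span {h}).restrictScalars R ↔
      𝒜 i ≤ I.restrictScalars R ⊓ 𝒜 i ⊔ (𝒜 (i - j)).map (LinearMap.mulRight R h) := by
  refine ⟨fun hle f hf => ?_, fun hle => hle.trans (sup_le ?_ ?_)⟩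
  · obtain ⟨p, hp, q, hq, hpq⟩ := Submodule.mem_sup.mp (hle hf)
    obtain ⟨r, rfl⟩ := Ideal.mem_span_singleton'.mp hq
    have hcomp := DirectSum.decompose_of_mem_same 𝒜 hf
    rw [← hpq, DirectSum.decompose_add, DirectSum.add_apply, Submodule.coe_add,
      DirectSum.coe_decompose_mul_of_right_mem_of_le 𝒜 hh hji] at hcomp
    rw [← hpq, ← hcomp]
    exact Submodule.add_mem_sup ⟨hI i hp, Submodule.coe_mem _⟩
      ⟨_, Submodule.coe_mem _, rfl⟩
  · exact inf_le_left.trans (Submodule.restrictScalars_mono R le_sup_left)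
  · rintro _ ⟨g, -, rfl⟩
    exact Submodule.mem_sup_right (Ideal.mul_mem_left _ g (Ideal.mem_span_singleton_self h))

end Graded

section Bigraded

variable {k : Type*} [Field k] {n m : ℕ}

theorem degree_eq_weight_wB_fst_add_snd (s : Vars n m →₀ ℕ) :
    s.degree = (Finsupp.weight (wB n m) s).1 + (Finsupp.weight (wB n m) s).2 := by
  simp [Finsupp.degree_eq_sum, Finsupp.weight_eq_sum, Fintype.sum_sum_type, wB, Prod.fst_sum,
    Prod.snd_sum]

instance (d : ℕ × ℕ) : FiniteDimensional k (biComponent k n m d) := by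
  rw [biComponent, weightedHomogeneousSubmodule_eq_finsupp_supported]
  have : {s | Finsupp.weight (wB n m) s = d}.Finite :=
    (Finsupp.finite_of_degree_eq (d.1 + d.2)).subset fun s (hs : _ = d) => by
      simp [degree_eq_weight_wB_fst_add_snd, hs]
  have := this.to_subtype
  exact Module.Finite.of_basis (basisRestrictSupport k _)

theorem HF_eq_zero_iff {I : Ideal (BiRing k n m)} {a b : ℕ} :
    HF k n m I a b = 0 ↔ biComponent k n m (a, b) ≤ I.restrictScalars k := by
  rw [HF, Submodule.finrank_eq_zero, ← LinearMap.le_ker_iff_map]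
  congr!
  ext f
  simp [Ideal.Quotient.eq_zero_iff_mem]

instance : GradedAlgebra (biComponent k n m) := weightedGradedAlgebra k (wB n m)

theorem IsBihomogeneous.isHomogeneous {I : Ideal (BiRing k n m)}
    (hI : IsBihomogeneous k n m I) : I.IsHomogeneous (biComponent k n m) := by
  obtain ⟨S, rfl, hS⟩ := hI
  exact Ideal.homogeneous_span _ S fun f hf => (hS f hf).imp fun _ => id

theorem isWeightedHomogeneous_linForm (v : Fin (n+1) → k) :
    (linForm k n m v).IsWeightedHomogeneous (wB n m) (1, 0) :=
  IsWeightedHomogeneous.sum _ _ _ fun i _ =>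
    (isWeightedHomogeneous_X k (wB n m) (Sum.inl i)).C_mul _

theorem mul_linForm (g : BiRing k n m) (v : Fin (n+1) → k) :
    g * linForm k n m v = ∑ i, v i • (g * X (Sum.inl i)) := by
  simp [linForm, Finset.mul_sum, smul_eq_C_mul, mul_left_comm]

theorem exists_eq_single_of_weight_wB_eq {s : Vars n m →₀ ℕ}
    (hs : Finsupp.weight (wB n m) s = (1, 0)) : ∃ i, s = Finsupp.single (Sum.inl i) 1 := by
  obtain ⟨v, rfl⟩ : s ∈ Set.range fun v => Finsupp.single v 1 := by
    rw [Finsupp.range_single_one]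
    simp [degree_eq_weight_wB_fst_add_snd, hs]
  cases v with
  | inl i => exact ⟨i, rfl⟩
  | inr j => simp [Finsupp.weight_single, wB] at hs

theorem exists_eq_linForm {h : BiRing k n m} (hh : h.IsWeightedHomogeneous (wB n m) (1, 0)) :
    ∃ c, h = linForm k n m c := by
  refine ⟨fun i => coeff (Finsupp.single (Sum.inl i) 1) h, ?_⟩
  ext s
  by_cases hs : Finsupp.weight (wB n m) s = (1, 0)
  · obtain ⟨i, rfl⟩ := exists_eq_single_of_weight_wB_eq hs
    simp [linForm, coeff_sum, coeff_X, Finsupp.single_left_inj]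
  · rw [hh.coeff_eq_zero s hs, (isWeightedHomogeneous_linForm _).coeff_eq_zero s hs]

theorem biComponent_succ_le_sup_span_linForm_iff {I : Ideal (BiRing k n m)}
    (hI : IsBihomogeneous k n m I) (a b : ℕ) (v : Fin (n+1) → k) :
    biComponent k n m (a+1, b) ≤ (I ⊔ Ideal.span {linForm k n m v}).restrictScalars k ↔
      biComponent k n m (a+1, b) ≤ I.restrictScalars k ⊓ biComponent k n m (a+1, b) ⊔
        (biComponent k n m (a, b)).map (LinearMap.mulRight k (linForm k n m v)) := by
  rw [hI.isHomogeneous.le_sup_span_singleton_iff (isWeightedHomogeneous_linForm v)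
    (by simp [Prod.le_def])]
  simp

theorem exists_ne_zero_forall_biComponent_le_sup_span_linForm {I : Ideal (BiRing k n m)}
    (hI : IsBihomogeneous k n m I) {a b : ℕ} {c : Fin (n+1) → k}
    (hc : biComponent k n m (a+1, b) ≤ (I ⊔ Ideal.span {linForm k n m c}).restrictScalars k) :
    ∃ P : MvPolynomial (Fin (n+1)) k, P ≠ 0 ∧ ∀ v, eval v P ≠ 0 →
      biComponent k n m (a+1, b) ≤ (I ⊔ Ideal.span {linForm k n m v}).restrictScalars k := by
  classical
  have : FiniteDimensional k ↥(I.restrictScalars k ⊓ biComponent k n m (a+1, b)) :=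
    Submodule.finiteDimensional_of_le inf_le_right
  obtain ⟨s, hs⟩ := (Submodule.fg_iff_finiteDimensional _).mpr this
  obtain ⟨t, ht⟩ := (Submodule.fg_iff_finiteDimensional (biComponent k n m (a, b))).mpr
    inferInstance
  let F₀ : s ⊕ t → BiRing k n m := Sum.elim Subtype.val 0
  let G : Fin (n+1) → s ⊕ t → BiRing k n m := fun i =>
    Sum.elim 0 fun g => (g : BiRing k n m) * X (Sum.inl i)
  have hspan : ∀ v, I.restrictScalars k ⊓ biComponent k n m (a+1, b) ⊔
      (biComponent k n m (a, b)).map (LinearMap.mulRight k (linForm k n m v)) =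
      Submodule.span k (Set.range fun j => F₀ j + ∑ i, v i • G i j) := by
    intro v
    have : (fun j => F₀ j + ∑ i, v i • G i j) =
        Sum.elim Subtype.val fun g : t => (g : BiRing k n m) * linForm k n m v := by
      ext (g | g) <;> simp [F₀, G, mul_linForm]
    rw [this, Set.Sum.elim_range, Submodule.span_union, ← hs, ← ht, Submodule.map_span,
      Subtype.range_coe]
    congr 2
    ext
    simp
  have hmem : ∀ g ∈ t, ∀ i, g * X (Sum.inl i) ∈ biComponent k n m (a+1, b) := fun g hg i =>
    IsWeightedHomogeneous.mul (ht ▸ Submodule.subset_span hg : g ∈ biComponent k n m (a, b))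
      (isWeightedHomogeneous_X k (wB n m) (Sum.inl i))
  simp only [biComponent_succ_le_sup_span_linForm_iff hI, hspan] at hc ⊢
  refine exists_ne_zero_forall_le_span_of_affine _ F₀ G ?_ ?_ c hc
  · rintro (g | g)
    · have hg : (g : BiRing k n m) ∈ I.restrictScalars k ⊓ biComponent k n m (a+1, b) :=
        hs ▸ Submodule.subset_span g.2
      exact hg.2
    · exact zero_mem _
  · rintro i (g | g)
    · exact zero_mem _
    · exact hmem g g.2 i

end Bigraded

theorem statement_5_general (k : Type*) [Field k] (hk : Infinite k) (n m : ℕ)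
    (I : Ideal (BiRing k n m)) (hI : IsBihomogeneous k n m I)
    (a b : ℕ) (hgen : GenInDegLE k n m I a b)
    (hHF : HF k n m I a b = HF k n m I (a+1) b) :
    IsAdmissible k n m I a b ↔
      ∃ P : MvPolynomial (Fin (n+1)) k, P ≠ 0 ∧
        ∀ v : Fin (n+1) → k, eval v P ≠ 0 →
          HF k n m (I ⊔ Ideal.span {linForm k n m v}) a b = 0 := by
  refine ⟨fun ⟨_, h, hh, _, hHF0⟩ => ?_, fun ⟨P, hP0, hP⟩ => ?_⟩
  · obtain ⟨c, rfl⟩ := exists_eq_linForm hh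
    simp only [HF_eq_zero_iff] at hHF0 ⊢
    cases a with
    | zero =>
      refine ⟨1, one_ne_zero, fun v _ f hf => Submodule.mem_sup_left ?_⟩
      exact hI.isHomogeneous.mem_of_mem_sup_span_singleton_of_not_le
        (isWeightedHomogeneous_linForm c) (by simp [Prod.le_def]) hf (hHF0 hf)
    | succ a => exact exists_ne_zero_forall_biComponent_le_sup_span_linForm hI hHF0
  · have := hk
    obtain ⟨v, hv⟩ : ∃ v, eval v P ≠ 0 := by
      by_contra! h
      exact hP0 (MvPolynomial.funext fun v => by simp [h v])
    exact ⟨hgen, linForm k n m v, isWeightedHomogeneous_linForm v, hHF, hP v hv⟩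

/-- Assume `V(I)` is nonempty, `I` is generated in bidegrees `≤ (a,b)` and
`HF_{R/I}(a,b) = HF_{R/I}(a+1,b)`. Then `(a,b)` is an admissible bidegree for `I` if and only if
`HF_{R/(I+⟨h'⟩)}(a,b) = 0` for a generic linear form `h'` of bidegree `(1,0)` (i.e. for all `h'`
whose coefficient vector lies in the nonvanishing locus of some nonzero polynomial). -/
theorem statement_5 (k : Type*) [Field k] (hk : Infinite k) (n m : ℕ)
    (I : Ideal (BiRing k n m)) (hI : IsBihomogeneous k n m I)
    (hne : (biprojZeros k n m (AlgebraicClosure k) I).Nonempty)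
    (a b : ℕ) (hgen : GenInDegLE k n m I a b)
    (hHF : HF k n m I a b = HF k n m I (a+1) b) :
    IsAdmissible k n m I a b ↔
      ∃ P : MvPolynomial (Fin (n+1)) k, P ≠ 0 ∧
        ∀ v : Fin (n+1) → k, eval v P ≠ 0 →
          HF k n m (I ⊔ Ideal.span {linForm k n m v}) a b = 0 :=
  statement_5_general k hk n m I hI a b hgen hHF
end
end

section
/- Let I ⊆ R be a bihomogeneous ideal and let (a,b) ∈ ℤ² be an admissible bidegree for I. Then for every b' ≥ b one has the inclusions π(V(I)) ⊆ π_{b'}(V(I)) ⊆ π_b(V(I)). -/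
open MvPolynomial

noncomputable section

variable (k : Type*) [Field k] (n m : ℕ)

variable (K : Type*) [Field K] [Algebra k K]

lemma aeval_sumElim_ιX (u : Fin (n+1) → K) (v : Fin (m+1) → K) (f : XRing k n) :
    aeval (Sum.elim u v) (ιX k n m f) = aeval u f := by
  simp only [ιX, aeval_rename, Sum.elim_comp_inl]

lemma Jb_mono (I : Ideal (BiRing k n m)) {b b' : ℕ} (hb : b ≤ b') :
    Jb k n m I b ≤ Jb k n m I b' :=
  Ideal.comap_mono <| Submodule.colon_mono le_rfl <|
    SetLike.coe_subset_coe.mpr (Ideal.pow_le_pow_right hb)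

lemma projZeros_anti_mono {J J' : Ideal (XRing k n)} (h : J ≤ J') :
    projZeros k n K J' ⊆ projZeros k n K J :=
  fun _ hξ f hf => hξ f (h hf)

lemma X_inr_pow_mem_myId_pow (j : Fin (m+1)) (b : ℕ) :
    (X (Sum.inr j) : BiRing k n m) ^ b ∈ myId k n m ^ b :=
  Ideal.pow_mem_pow (Ideal.subset_span (Set.mem_range_self j)) b

lemma piV_subset_projZeros_Jb (I : Ideal (BiRing k n m)) (b : ℕ) :
    piV k n m K I ⊆ projZeros k n K (Jb k n m I b) := by
  rintro _ ⟨⟨ξ, η⟩, hV, rfl⟩ f hf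
  obtain ⟨j, hj⟩ : ∃ j, η.rep j ≠ 0 := Function.ne_iff.mp η.rep_nonzero
  have hmem : ιX k n m f * X (Sum.inr j) ^ b ∈ I :=
    Submodule.mem_colon.mp hf _ (X_inr_pow_mem_myId_pow k n m j b)
  have hzero := hV _ hmem
  rw [map_mul, map_pow, aeval_X, Sum.elim_inr, aeval_sumElim_ιX] at hzero
  exact (mul_eq_zero.mp hzero).resolve_right (pow_ne_zero _ hj)

theorem statement_6_general (k : Type*) [Field k] (n m : ℕ)
    (I : Ideal (BiRing k n m))
    (b : ℕ) :
    ∀ b' : ℕ, b ≤ b' →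
      piV k n m (AlgebraicClosure k) I
          ⊆ projZeros k n (AlgebraicClosure k) (Jb k n m I b') ∧
      projZeros k n (AlgebraicClosure k) (Jb k n m I b')
          ⊆ projZeros k n (AlgebraicClosure k) (Jb k n m I b) :=
  fun _ hb' => ⟨piV_subset_projZeros_Jb k n m _ I _, projZeros_anti_mono k n _ (Jb_mono k n m I hb')⟩

/-- If `(a,b)` is an admissible bidegree for the bihomogeneous ideal `I`, then
for every `b' ≥ b` one has `π(V(I)) ⊆ π_{b'}(V(I)) ⊆ π_b(V(I))` (zero loci over the algebraic
closure of `k`). -/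
theorem statement_6 (k : Type*) [Field k] (hk : Infinite k) (n m : ℕ)
    (I : Ideal (BiRing k n m)) (hI : IsBihomogeneous k n m I)
    (a b : ℕ) (hadm : IsAdmissible k n m I a b) :
    ∀ b' : ℕ, b ≤ b' →
      piV k n m (AlgebraicClosure k) I
          ⊆ projZeros k n (AlgebraicClosure k) (Jb k n m I b') ∧
      projZeros k n (AlgebraicClosure k) (Jb k n m I b')
          ⊆ projZeros k n (AlgebraicClosure k) (Jb k n m I b) :=
  statement_6_general k n m I b
end
end
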